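/- Let (Ω, 𝓕, ℙ) be a probability space, n a natural number, p ≥ 1 a real number, and a : Fin n → ℝ a family of nonnegative real numbers (the ages of n transactions). Let S : Fin n → Ω → ℝ be nonnegative random variables (the service times attached to the n scheduling positions) such that each (a(τ(i)) + ∑_{j ≤ i} S(j))^p is integrable for every permutation τ. Let σ be a permutation of Fin n such that a ∘ σ is antitone (eldest transaction scheduled first). Then for every permutation τ of Fin n, 𝔼[∑ᵢ (a(σ(i)) + ∑_{j ≤ i} S(j))^p] ≤ 𝔼[∑ᵢ (a(τ(i)) + ∑_{j ≤ i} S(j))^p]. -/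

import Mathlib

/-!
Fix ω. The completion times `c i = ∑_{j ≤ i} S j ω` of the positions are nondecreasing, so the
claim follows by integrating a deterministic rearrangement inequality. Since `x ↦ x ^ p` is convex
on `[0, ∞)`, the cost `f x c = (x + c) ^ p` has the exchange property
`f y s + f x t ≤ f x s + f y t` for `x ≤ y`, `s ≤ t`: giving the older transaction the earlier
position never hurts. Exchanging the eldest transaction into position `0` and recursing on the
remaining positions turns any schedule into the eldest-first one without increasing the cost.
-/

open MeasureTheory Finset
open scoped NNReal

theorem ConvexOn.add_le_add_of_add_eq {𝕜 : Type*} [Field 𝕜] [LinearOrder 𝕜]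
    [IsStrictOrderedRing 𝕜] {s : Set 𝕜} {φ : 𝕜 → 𝕜} (hφ : ConvexOn 𝕜 s φ)
    {u v m m' : 𝕜} (hu : u ∈ s) (hv : v ∈ s) (hum : u ≤ m) (hmv : m ≤ v)
    (hsum : m + m' = u + v) :
    φ m + φ m' ≤ φ u + φ v := by
  obtain rfl : m' = u + v - m := by linarith
  rcases hum.eq_or_lt with rfl | hum
  · simp
  rcases hmv.eq_or_lt with rfl | hmv
  · simp [add_comm]
  have hm := hφ.secant_mono_aux1 hu hv hum hmv
  have hm' := hφ.secant_mono_aux1 hu hv (by linarith : u < u + v - m) (by linarith)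
  refine le_of_mul_le_mul_left ?_ (sub_pos.2 (hum.trans hmv))
  linear_combination hm + hm'

theorem Equiv.Perm.exists_apply_succ_eq_succ {n : ℕ} {π : Equiv.Perm (Fin (n + 1))}
    (h0 : π 0 = 0) :
    ∃ e : Equiv.Perm (Fin n), ∀ x, π x.succ = (e x).succ := by
  obtain ⟨⟨p, e⟩, rfl⟩ := Equiv.Perm.decomposeFin.symm.surjective π
  rw [Equiv.Perm.decomposeFin_symm_apply_zero] at h0
  subst h0
  refine ⟨e, fun x => ?_⟩
  rw [Equiv.Perm.decomposeFin_symm_apply_succ, Equiv.swap_self, Equiv.refl_apply]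

section Exchange

variable {ι α β M : Type*} [Preorder α] [Preorder β]
  [AddCommMonoid M] [PartialOrder M] [IsOrderedAddMonoid M]

theorem sum_comp_swap_le [Fintype ι] [DecidableEq ι] {f : α → β → M}
    (hf : ∀ ⦃x y s t⦄, x ≤ y → s ≤ t → f y s + f x t ≤ f x s + f y t)
    {u : ι → α} {h : ι → β} {i j : ι} (hu : u i ≤ u j) (hh : h i ≤ h j) :
    ∑ k, f (u (Equiv.swap i j k)) (h k) ≤ ∑ k, f (u k) (h k) := by
  rcases eq_or_ne i j with rfl | hij
  · simp
  rw [← sum_add_sum_compl {i, j}, ← sum_add_sum_compl {i, j} (fun k => f (u k) (h k)),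
    sum_pair hij, sum_pair hij, Equiv.swap_apply_left, Equiv.swap_apply_right]
  refine add_le_add (hf hu hh) (sum_le_sum fun k hk => ?_)
  simp only [mem_compl, mem_insert, mem_singleton, not_or] at hk
  rw [Equiv.swap_apply_of_ne_of_ne hk.1 hk.2]

theorem sum_le_sum_comp_perm_of_exchange {f : α → β → M}
    (hf : ∀ ⦃x y s t⦄, x ≤ y → s ≤ t → f y s + f x t ≤ f x s + f y t) :
    ∀ {n : ℕ} {g : Fin n → α} {h : Fin n → β}, Antitone g → Monotone h →
      ∀ π : Equiv.Perm (Fin n), ∑ i, f (g i) (h i) ≤ ∑ i, f (g (π i)) (h i)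
  | 0, _, _, _, _, _ => by simp
  | n + 1, g, h, hg, hh, π => by
    set j := π.symm 0
    have hπ'0 : (π * Equiv.swap 0 j) 0 = 0 := by simp [j]
    obtain ⟨e, he⟩ := Equiv.Perm.exists_apply_succ_eq_succ hπ'0
    calc ∑ i, f (g i) (h i)
        = f (g 0) (h 0) + ∑ i : Fin n, f (g i.succ) (h i.succ) := Fin.sum_univ_succ _
      _ ≤ f (g 0) (h 0) + ∑ i : Fin n, f (g (e i).succ) (h i.succ) :=
          add_le_add_right (sum_le_sum_comp_perm_of_exchange hf
            (hg.comp_monotone Fin.strictMono_succ.monotone)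
            (hh.comp Fin.strictMono_succ.monotone) e) _
      _ = ∑ i, f (g ((π * Equiv.swap 0 j) i)) (h i) := by
          rw [Fin.sum_univ_succ, hπ'0]; simp only [he]
      _ ≤ ∑ i, f (g (π i)) (h i) :=
          sum_comp_swap_le (u := g ∘ π) hf (by simpa [j] using hg (Fin.zero_le (π 0)))
            (hh (Fin.zero_le j))

end Exchange

theorem vats_optimal_general {Ω : Type*} [MeasurableSpace Ω] (μ : Measure Ω)
    (n : ℕ) (p : ℝ) (hp : 1 ≤ p)
    (a : Fin n → ℝ) (ha : ∀ i, 0 ≤ a i)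
    (S : Fin n → Ω → ℝ) (hS : ∀ j ω, 0 ≤ S j ω)
    (hint : ∀ (τ : Equiv.Perm (Fin n)) (i : Fin n),
      Integrable (fun ω => (a (τ i) + ∑ j ∈ Finset.Iic i, S j ω) ^ p) μ)
    (σ : Equiv.Perm (Fin n)) (hσ : Antitone (a ∘ σ)) :
    ∀ τ : Equiv.Perm (Fin n),
      (∫ ω, ∑ i, (a (σ i) + ∑ j ∈ Finset.Iic i, S j ω) ^ p ∂μ) ≤
        ∫ ω, ∑ i, (a (τ i) + ∑ j ∈ Finset.Iic i, S j ω) ^ p ∂μ := by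
  intro τ
  refine integral_mono (integrable_finsetSum _ fun i _ => hint σ i)
    (integrable_finsetSum _ fun i _ => hint τ i) fun ω => ?_
  have hexchange : ∀ ⦃x y s t : ℝ≥0⦄, x ≤ y → s ≤ t →
      ((y : ℝ) + s) ^ p + ((x : ℝ) + t) ^ p ≤ ((x : ℝ) + s) ^ p + ((y : ℝ) + t) ^ p :=
    fun x y s t hxy hst => (convexOn_rpow hp).add_le_add_of_add_eq
      (Set.mem_Ici.2 (by positivity)) (Set.mem_Ici.2 (by positivity)) (by gcongr) (by gcongr)
      (by ring)
  have hservice : Monotone fun i => (∑ j ∈ Iic i, S j ω).toNNReal := fun i k hik =>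
    Real.toNNReal_mono (sum_le_sum_of_subset_of_nonneg (Iic_subset_Iic.2 hik) fun j _ _ => hS j ω)
  simpa [Real.coe_toNNReal, ha, sum_nonneg, hS] using sum_le_sum_comp_perm_of_exchange hexchange
    (Real.toNNReal_monotone.comp_antitone hσ) hservice (σ⁻¹ * τ)

/-- Single-queue instance of the VATS optimality theorem (Theorem 1): with
nonnegative ages `a i`, nonnegative random service times `S j` attached to the
scheduling positions, and latencies `a (τ i) + ∑_{j ≤ i} S j` for a schedule
`τ`, the eldest-first schedule `σ` minimizes the expected sum of `p`-th powers
of the latencies over all schedules. -/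
theorem vats_optimal {Ω : Type*} [MeasurableSpace Ω] (μ : Measure Ω)
    [IsProbabilityMeasure μ] (n : ℕ) (p : ℝ) (hp : 1 ≤ p)
    (a : Fin n → ℝ) (ha : ∀ i, 0 ≤ a i)
    (S : Fin n → Ω → ℝ) (hS : ∀ j ω, 0 ≤ S j ω)
    (hint : ∀ (τ : Equiv.Perm (Fin n)) (i : Fin n),
      Integrable (fun ω => (a (τ i) + ∑ j ∈ Finset.Iic i, S j ω) ^ p) μ)
    (σ : Equiv.Perm (Fin n)) (hσ : Antitone (a ∘ σ)) :
    ∀ τ : Equiv.Perm (Fin n),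
      (∫ ω, ∑ i, (a (σ i) + ∑ j ∈ Finset.Iic i, S j ω) ^ p ∂μ) ≤
        ∫ ω, ∑ i, (a (τ i) + ∑ j ∈ Finset.Iic i, S j ω) ^ p ∂μ :=
  vats_optimal_general μ n p hp a ha S hS hint σ hσ
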